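/- Let n be a natural number, Rhat in SO(3), E and deltaB real 3xn matrices with columns e^i and deltab^i, W = diag(w^1, ..., w^n) a real diagonal nxn matrix, and Ltilde any real 3x3 matrix. Then for xi in R^3, the equation hat(xi) * Rhat^T * Ltilde + Ltilde^T * Rhat * hat(xi) = deltaB * W * E^T * Rhat - Rhat^T * E * W * deltaB^T holds if and only if ( trace(Rhat^T * Ltilde) * I_3 - Rhat^T * Ltilde ) * xi = sum over i of w^i * hat(Rhat^T e^i) * deltab^i. (Theorem 7: first-order relation between the attitude error of the Wahba-optimal attitude and the vector measurement errors, left-invariant error case.) -/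

import Mathlib

open Matrix

noncomputable section

/-- `SO3 R` means `R` is a rotation matrix: `Rᵀ R = I₃` and `det R = 1`. -/
def SO3 (R : Matrix (Fin 3) (Fin 3) ℝ) : Prop :=
  Rᵀ * R = 1 ∧ R.det = 1

/-- The hat map sending `w ∈ ℝ³` to the skew-symmetric matrix
`[[0,-w3,w2],[w3,0,-w1],[-w2,w1,0]]`. -/
def hat (w : Fin 3 → ℝ) : Matrix (Fin 3) (Fin 3) ℝ :=
  !![0, -w 2, w 1; w 2, 0, -w 0; -w 1, w 0, 0]

/-!
Both sides of the equation are hats of vectors. On the left, with `A = R̂ᵀ L̃`, this is the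
identity `a^ A + Aᵀ a^ = ((tr A • I - A) a)^`. On the right, `δB W Eᵀ R̂ = δB W (R̂ᵀ E)ᵀ` splits into
rank-one terms `wⁱ δbⁱ (R̂ᵀ eⁱ)ᵀ`, and `b aᵀ - a bᵀ = (a^ b)^`. Injectivity of the hat map
turns the matrix equation into the vector equation.
-/

theorem hat_injective : Function.Injective hat := by
  intro u v h
  funext i
  fin_cases i
  · simpa [hat] using congrFun (congrFun h 2) 1
  · simpa [hat] using congrFun (congrFun h 0) 2
  · simpa [hat] using congrFun (congrFun h 1) 0

def hatLinearMap : (Fin 3 → ℝ) →ₗ[ℝ] Matrix (Fin 3) (Fin 3) ℝ where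
  toFun := hat
  map_add' u v := by
    ext i j
    fin_cases i <;> fin_cases j <;> simp [hat] <;> ring
  map_smul' c u := by
    ext i j
    fin_cases i <;> fin_cases j <;> simp [hat]

theorem hat_sum {ι : Type*} (s : Finset ι) (f : ι → Fin 3 → ℝ) :
    hat (∑ i ∈ s, f i) = ∑ i ∈ s, hat (f i) :=
  map_sum hatLinearMap f s

theorem hat_smul (c : ℝ) (u : Fin 3 → ℝ) : hat (c • u) = c • hat u :=
  map_smul hatLinearMap c u

theorem hat_mul_add_transpose_mul_hat (A : Matrix (Fin 3) (Fin 3) ℝ) (a : Fin 3 → ℝ) :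
    hat a * A + Aᵀ * hat a = hat ((A.trace • (1 : Matrix (Fin 3) (Fin 3) ℝ) - A) *ᵥ a) := by
  ext i j
  fin_cases i <;> fin_cases j <;>
    · simp [hat, mul_apply, mulVec, vecMul, trace, Fin.sum_univ_three, dotProduct, one_apply]
      ring

theorem vecMulVec_sub_vecMulVec_eq_hat (a b : Fin 3 → ℝ) :
    vecMulVec b a - vecMulVec a b = hat (hat a *ᵥ b) := by
  ext i j
  fin_cases i <;> fin_cases j <;>
    · simp [hat, vecMulVec_apply, mulVec, dotProduct, Fin.sum_univ_three]
      ring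

theorem mul_diagonal_mul_transpose_eq_sum_vecMulVec {R m n p : Type*} [CommSemiring R]
    [Fintype n] [DecidableEq n] (X : Matrix m n R) (w : n → R) (Y : Matrix p n R) :
    X * diagonal w * Yᵀ = ∑ k, w k • vecMulVec (Xᵀ k) (Yᵀ k) := by
  ext i j
  simp only [mul_apply, diagonal_apply, mul_ite, mul_zero, Finset.sum_ite_eq',
    Finset.mem_univ, if_true, transpose_apply, Matrix.sum_apply, Matrix.smul_apply,
    vecMulVec_apply, smul_eq_mul]
  exact Finset.sum_congr rfl fun k _ => by ring

theorem mul_diagonal_mul_transpose_sub_eq_hat {n : ℕ} (X Y : Matrix (Fin 3) (Fin n) ℝ)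
    (w : Fin n → ℝ) :
    X * diagonal w * Yᵀ - Y * diagonal w * Xᵀ = hat (∑ k, w k • hat (Yᵀ k) *ᵥ Xᵀ k) := by
  simp only [mul_diagonal_mul_transpose_eq_sum_vecMulVec, ← Finset.sum_sub_distrib, ← smul_sub,
    vecMulVec_sub_vecMulVec_eq_hat, hat_sum, hat_smul]

theorem stmt11_general (n : ℕ) (Rhat : Matrix (Fin 3) (Fin 3) ℝ)
    (E deltaB : Matrix (Fin 3) (Fin n) ℝ) (w : Fin n → ℝ)
    (W : Matrix (Fin n) (Fin n) ℝ) (hW : W = Matrix.diagonal w)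
    (Ltilde : Matrix (Fin 3) (Fin 3) ℝ) (xi : Fin 3 → ℝ) :
    (hat xi * Rhatᵀ * Ltilde + Ltildeᵀ * Rhat * hat xi =
        deltaB * W * Eᵀ * Rhat - Rhatᵀ * E * W * deltaBᵀ) ↔
      (Matrix.trace (Rhatᵀ * Ltilde) • (1 : Matrix (Fin 3) (Fin 3) ℝ) -
          Rhatᵀ * Ltilde).mulVec xi =
        ∑ i : Fin n, w i •
          (hat (Rhatᵀ.mulVec fun l => E l i)).mulVec fun l => deltaB l i := by
  subst hW
  have lhs : hat xi * Rhatᵀ * Ltilde + Ltildeᵀ * Rhat * hat xi =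
      hat xi * (Rhatᵀ * Ltilde) + (Rhatᵀ * Ltilde)ᵀ * hat xi := by
    rw [transpose_mul, transpose_transpose, Matrix.mul_assoc]
  have rhs : deltaB * diagonal w * Eᵀ * Rhat - Rhatᵀ * E * diagonal w * deltaBᵀ =
      deltaB * diagonal w * (Rhatᵀ * E)ᵀ - (Rhatᵀ * E) * diagonal w * deltaBᵀ := by
    rw [transpose_mul, transpose_transpose, Matrix.mul_assoc _ Eᵀ]
  rw [lhs, rhs, hat_mul_add_transpose_mul_hat, mul_diagonal_mul_transpose_sub_eq_hat,
    hat_injective.eq_iff]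
  rfl

/-- Theorem 7 (left-invariant error case): the linearized optimality condition
`ξ^ R̂ᵀ L̃ + L̃ᵀ R̂ ξ^ = δB W Eᵀ R̂ - R̂ᵀ E W δBᵀ` holds iff
`(tr(R̂ᵀ L̃) I₃ - R̂ᵀ L̃) ξ = ∑ᵢ wⁱ (R̂ᵀ eⁱ)^ δbⁱ`. -/
theorem stmt11 (n : ℕ) (Rhat : Matrix (Fin 3) (Fin 3) ℝ) (hR : SO3 Rhat)
    (E deltaB : Matrix (Fin 3) (Fin n) ℝ) (w : Fin n → ℝ)
    (W : Matrix (Fin n) (Fin n) ℝ) (hW : W = Matrix.diagonal w)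
    (Ltilde : Matrix (Fin 3) (Fin 3) ℝ) (xi : Fin 3 → ℝ) :
    (hat xi * Rhatᵀ * Ltilde + Ltildeᵀ * Rhat * hat xi =
        deltaB * W * Eᵀ * Rhat - Rhatᵀ * E * W * deltaBᵀ) ↔
      (Matrix.trace (Rhatᵀ * Ltilde) • (1 : Matrix (Fin 3) (Fin 3) ℝ) -
          Rhatᵀ * Ltilde).mulVec xi =
        ∑ i : Fin n, w i •
          (hat (Rhatᵀ.mulVec fun l => E l i)).mulVec fun l => deltaB l i :=
  stmt11_general n Rhat E deltaB w W hW Ltilde xi
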